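/- arXiv:2409.01748 — 6 statements merged into one kernel-verified Lean document; each statement's English description precedes it below -/
import Mathlib

section
/- Let S ⊂ ℝ² be a bounded open set, f ∈ L²(S; ℝ³) with zero mean, F(R) = ∫_S f · R (x', 0)ᵀ dx', and let R be a maximizer of F over SO(3). Define a(R) = ∫_S f · R (x₁,0,0)ᵀ dx' and b(R) = ∫_S f · R (0,x₂,0)ᵀ dx'. Then a(R) ≥ 0 and b(R) ≥ 0. -/
open MeasureTheory Matrix

/-!
Right-multiplying `R` by `D = diag(ε₁, ε₂, ε₁ε₂)` with `εᵢ = ±1` keeps it in `SO(3)` and changes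
`F(R) = a(R) + b(R)` into `F(RD) = ε₁ a(R) + ε₂ b(R)`. Comparing the maximizer with `R diag(-1, 1, -1)`
gives `-a + b ≤ a + b`, and with `R diag(1, -1, -1)` gives `a - b ≤ a + b`.
-/

theorem Matrix.diagonal_mem_specialOrthogonalGroup {n R : Type*} [Fintype n] [DecidableEq n]
    [CommRing R] {d : n → R} (hsq : ∀ i, d i * d i = 1) (hprod : ∏ i, d i = 1) :
    diagonal d ∈ specialOrthogonalGroup n R := by
  refine mem_specialOrthogonalGroup_iff.2
    ⟨(mem_orthogonalGroup_iff' _ _).2 ?_, by rwa [det_diagonal]⟩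
  rw [diagonal_transpose, diagonal_mul_diagonal, ← diagonal_one]
  exact congrArg diagonal (funext hsq)

theorem dotProduct_mul_diagonal_mulVec (w d : Fin 3 → ℝ) (A : Matrix (Fin 3) (Fin 3) ℝ)
    (x : Fin 2 → ℝ) :
    w ⬝ᵥ (A * diagonal d) *ᵥ ![x 0, x 1, 0]
      = d 0 * (w ⬝ᵥ A *ᵥ ![x 0, 0, 0]) + d 1 * (w ⬝ᵥ A *ᵥ ![0, x 1, 0]) := by
  simp only [dotProduct, mulVec, diagonal, mul_apply, of_apply, mul_ite, mul_zero,
    Finset.sum_ite_eq', Finset.mem_univ, ↓reduceIte, Fin.sum_univ_three, cons_val_zero,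
    cons_val_one, cons_val, add_zero, zero_add]
  ring

section PlanarLoad

variable {S : Set (Fin 2 → ℝ)} {f : (Fin 2 → ℝ) → (Fin 3 → ℝ)}

theorem integrableOn_dotProduct_mulVec_single
    (hInt : ∀ (i : Fin 3) (j : Fin 2), IntegrableOn (fun x => f x i * x j) S)
    (A : Matrix (Fin 3) (Fin 3) ℝ) (j : Fin 2) :
    IntegrableOn (fun x => f x ⬝ᵥ A *ᵥ Pi.single j.castSucc (x j)) S := by
  have hsum : (fun x => f x ⬝ᵥ A *ᵥ Pi.single j.castSucc (x j))
      = fun x => ∑ i, A i j.castSucc * (f x i * x j) := by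
    funext x
    exact Finset.sum_congr rfl fun i _ => by simp; ring
  rw [hsum]
  exact integrable_finsetSum _ fun i _ => (hInt i j).const_mul _

theorem integral_dotProduct_mul_diagonal_mulVec
    (hInt : ∀ (i : Fin 3) (j : Fin 2), IntegrableOn (fun x => f x i * x j) S)
    (A : Matrix (Fin 3) (Fin 3) ℝ) (d : Fin 3 → ℝ) :
    ∫ x in S, f x ⬝ᵥ (A * diagonal d) *ᵥ ![x 0, x 1, 0]
      = d 0 * (∫ x in S, f x ⬝ᵥ A *ᵥ ![x 0, 0, 0])
        + d 1 * ∫ x in S, f x ⬝ᵥ A *ᵥ ![0, x 1, 0] := by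
  have hfirst : IntegrableOn (fun x => f x ⬝ᵥ A *ᵥ ![x 0, 0, 0]) S := by
    convert integrableOn_dotProduct_mulVec_single hInt A 0 using 4 with x
    ext i; fin_cases i <;> simp
  have hsecond : IntegrableOn (fun x => f x ⬝ᵥ A *ᵥ ![0, x 1, 0]) S := by
    convert integrableOn_dotProduct_mulVec_single hInt A 1 using 4 with x
    ext i; fin_cases i <;> simp
  simp_rw [dotProduct_mul_diagonal_mulVec]
  rw [integral_add (hfirst.const_mul _) (hsecond.const_mul _), integral_const_mul,
    integral_const_mul]

end PlanarLoad

theorem stmt1_general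
    (S : Set (Fin 2 → ℝ))
    (f : (Fin 2 → ℝ) → (Fin 3 → ℝ))
    (hInt : ∀ (i : Fin 3) (j : Fin 2), IntegrableOn (fun x => f x i * x j) S)
    (F : Matrix (Fin 3) (Fin 3) ℝ → ℝ)
    (hF : ∀ A, F A = ∫ x in S, (f x) ⬝ᵥ A.mulVec ![x 0, x 1, 0])
    (R₀ : Matrix (Fin 3) (Fin 3) ℝ)
    (hR₀ : R₀ᵀ * R₀ = 1 ∧ R₀.det = 1)
    (hmax : ∀ R : Matrix (Fin 3) (Fin 3) ℝ, Rᵀ * R = 1 → R.det = 1 → F R ≤ F R₀) :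
    0 ≤ ∫ x in S, (f x) ⬝ᵥ R₀.mulVec ![x 0, 0, 0] ∧
    0 ≤ ∫ x in S, (f x) ⬝ᵥ R₀.mulVec ![0, x 1, 0] := by
  set a := ∫ x in S, f x ⬝ᵥ R₀ *ᵥ ![x 0, 0, 0]
  set b := ∫ x in S, f x ⬝ᵥ R₀ *ᵥ ![0, x 1, 0]
  have hR₀SO : R₀ ∈ specialOrthogonalGroup (Fin 3) ℝ :=
    mem_specialOrthogonalGroup_iff.2 ⟨(mem_orthogonalGroup_iff' _ _).2 hR₀.1, hR₀.2⟩
  have hFR₀ : F R₀ = a + b := by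
    simpa [← hF] using integral_dotProduct_mul_diagonal_mulVec hInt R₀ 1
  have hflip : ∀ d : Fin 3 → ℝ, (∀ i, d i * d i = 1) → ∏ i, d i = 1 →
      d 0 * a + d 1 * b ≤ a + b := by
    intro d hsq hprod
    have hR₀d := Submonoid.mul_mem _ hR₀SO (diagonal_mem_specialOrthogonalGroup hsq hprod)
    rw [← hFR₀, ← integral_dotProduct_mul_diagonal_mulVec hInt, ← hF]
    exact hmax _ ((mem_orthogonalGroup_iff' _ _).1 hR₀d.1) hR₀d.2
  have ha := hflip ![-1, 1, -1] (by simp [Fin.forall_fin_succ]) (by simp [Fin.prod_univ_three])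
  have hb := hflip ![1, -1, -1] (by simp [Fin.forall_fin_succ]) (by simp [Fin.prod_univ_three])
  simp only [cons_val_zero, cons_val_one, neg_one_mul, one_mul] at ha hb
  constructor <;> linarith

/-- If `R₀` maximizes `F` over `SO(3)`, then
`a(R₀) = ∫_S f · R₀ (x₁,0,0)ᵀ ≥ 0` and `b(R₀) = ∫_S f · R₀ (0,x₂,0)ᵀ ≥ 0`. -/
theorem stmt1
    (S : Set (Fin 2 → ℝ)) (hSopen : IsOpen S) (hSbdd : Bornology.IsBounded S)
    (f : (Fin 2 → ℝ) → (Fin 3 → ℝ))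
    (hfL2 : ∀ i : Fin 3, MemLp (fun x => f x i) 2 (volume.restrict S))
    (hfInt : ∀ i : Fin 3, IntegrableOn (fun x => f x i) S)
    (hmean : ∀ i : Fin 3, ∫ x in S, f x i = 0)
    (hInt : ∀ (i : Fin 3) (j : Fin 2), IntegrableOn (fun x => f x i * x j) S)
    (F : Matrix (Fin 3) (Fin 3) ℝ → ℝ)
    (hF : ∀ A, F A = ∫ x in S, (f x) ⬝ᵥ A.mulVec ![x 0, x 1, 0])
    (R₀ : Matrix (Fin 3) (Fin 3) ℝ)
    (hR₀ : R₀ᵀ * R₀ = 1 ∧ R₀.det = 1)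
    (hmax : ∀ R : Matrix (Fin 3) (Fin 3) ℝ, Rᵀ * R = 1 → R.det = 1 → F R ≤ F R₀) :
    0 ≤ ∫ x in S, (f x) ⬝ᵥ R₀.mulVec ![x 0, 0, 0] ∧
    0 ≤ ∫ x in S, (f x) ⬝ᵥ R₀.mulVec ![0, x 1, 0] :=
  stmt1_general S f hInt F hF R₀ hR₀ hmax
end

section
/- The sigmoid function σ(x) = 1/(1+e^{−x}) is discriminatory on a compact set K ⊂ ℝ²: if μ is a signed finite regular Borel measure on K such that ∫_K σ(yᵀx + θ) dμ(x) = 0 for all y ∈ ℝ² and all θ ∈ ℝ, then μ = 0. -/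
/-!
As `n → ∞`, `σ(n (n (t - a) + 1)) → 𝟙[a, ∞)(t)` pointwise and boundedly. Hence the sigmoid
integrals of a finite measure determine the mass of every half-line `[a, ∞)` under its
pushforward by each continuous linear functional, so they determine all these one-dimensional
pushforwards, hence the characteristic function (Cramér–Wold), hence the measure. Applied to the
positive and negative parts of `μ`, this gives `μ⁺ = μ⁻`, i.e. `μ = 0`.
-/

open MeasureTheory Filter Topology Real Set

-- The offset `+ 1` makes the limit at `t = a` equal to `1` instead of `σ 0 = 1 / 2`.
lemma tendsto_sigmoid_indicator_Ici (a t : ℝ) :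
    Tendsto (fun n : ℕ ↦ sigmoid (n * (n * (t - a) + 1))) atTop
      (𝓝 ((Ici a).indicator 1 t)) := by
  rcases le_or_gt a t with hat | hta
  · rw [indicator_of_mem (mem_Ici.2 hat)]
    refine tendsto_sigmoid_atTop.comp (tendsto_atTop_mono (fun n ↦ ?_) tendsto_natCast_atTop_atTop)
    have : 0 ≤ (n : ℝ) * (t - a) := mul_nonneg n.cast_nonneg (sub_nonneg.2 hat)
    nlinarith [n.cast_nonneg (α := ℝ)]
  · rw [indicator_of_notMem (notMem_Ici.2 hta)]
    have hlin : Tendsto (fun n : ℕ ↦ (n : ℝ) * (t - a) + 1) atTop atBot :=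
      tendsto_atBot_add_const_right _ _
        (tendsto_natCast_atTop_atTop.atTop_mul_const_of_neg (sub_neg.2 hta))
    exact tendsto_sigmoid_atBot.comp (tendsto_natCast_atTop_atTop.atTop_mul_atBot₀ hlin)

lemma tendsto_integral_sigmoid_measureReal_Ici (ν : Measure ℝ) [IsFiniteMeasure ν] (a : ℝ) :
    Tendsto (fun n : ℕ ↦ ∫ t, sigmoid (n * (n * (t - a) + 1)) ∂ν) atTop
      (𝓝 (ν.real (Ici a))) := by
  rw [← integral_indicator_one measurableSet_Ici]
  refine tendsto_integral_of_dominated_convergence (fun _ ↦ 1) (fun n ↦ ?_) (integrable_const 1)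
    (fun n ↦ ae_of_all _ fun t ↦ ?_) (ae_of_all _ (tendsto_sigmoid_indicator_Ici a))
  · exact (continuous_sigmoid.comp (by fun_prop)).aestronglyMeasurable
  · rw [norm_of_nonneg (sigmoid_nonneg _)]
    exact sigmoid_le_one _

lemma StrongDual.apply_eq_dotProduct {n : Type*} [Fintype n] [DecidableEq n]
    (L : StrongDual ℝ (n → ℝ)) (x : n → ℝ) : L x = (fun i ↦ L (Pi.single i 1)) ⬝ᵥ x := by
  conv_lhs => rw [← Finset.univ_sum_single x]
  simp only [map_sum, dotProduct]
  refine Finset.sum_congr rfl fun i _ ↦ ?_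
  rw [mul_comm, ← smul_eq_mul, ← map_smul, ← Pi.single_smul', smul_eq_mul, mul_one]

namespace MeasureTheory

theorem Measure.ext_of_integral_sigmoid_eq {ν ν' : Measure ℝ} [IsFiniteMeasure ν]
    [IsFiniteMeasure ν']
    (h : ∀ w θ : ℝ, ∫ t, sigmoid (w * t + θ) ∂ν = ∫ t, sigmoid (w * t + θ) ∂ν') : ν = ν' := by
  refine Measure.ext_of_Ici ν ν' fun a ↦ ?_
  have h' : ∀ n : ℕ, ∫ t, sigmoid (n * (n * (t - a) + 1)) ∂ν
      = ∫ t, sigmoid (n * (n * (t - a) + 1)) ∂ν' := fun n ↦ by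
    have hlin : ∀ t : ℝ, (n : ℝ) * (n * (t - a) + 1) = n ^ 2 * t + (n - n ^ 2 * a) := fun t ↦ by
      ring
    simp_rw [hlin]
    exact h _ _
  have hreal : ν.real (Ici a) = ν'.real (Ici a) :=
    tendsto_nhds_unique (tendsto_integral_sigmoid_measureReal_Ici ν a)
      ((funext h').symm ▸ tendsto_integral_sigmoid_measureReal_Ici ν' a)
  exact (ENNReal.toReal_eq_toReal_iff' (measure_ne_top _ _) (measure_ne_top _ _)).1 hreal

section NormedSpace

variable {E : Type*} [NormedAddCommGroup E] [NormedSpace ℝ E] [CompleteSpace E]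
  [SecondCountableTopology E] [MeasurableSpace E] [BorelSpace E]

theorem Measure.ext_of_map_strongDual {μ ν : Measure E} [IsFiniteMeasure μ] [IsFiniteMeasure ν]
    (h : ∀ L : StrongDual ℝ E, μ.map L = ν.map L) : μ = ν :=
  Measure.ext_of_charFunDual <| funext fun L ↦ by
    rw [charFunDual_eq_charFun_map_one, charFunDual_eq_charFun_map_one, h L]

theorem Measure.ext_of_integral_sigmoid_strongDual_eq {μ ν : Measure E} [IsFiniteMeasure μ]
    [IsFiniteMeasure ν]
    (h : ∀ (L : StrongDual ℝ E) (θ : ℝ), ∫ x, sigmoid (L x + θ) ∂μ = ∫ x, sigmoid (L x + θ) ∂ν) :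
    μ = ν := by
  refine Measure.ext_of_map_strongDual fun L ↦ Measure.ext_of_integral_sigmoid_eq fun w θ ↦ ?_
  have hcont : Continuous fun t ↦ sigmoid (w * t + θ) := continuous_sigmoid.comp (by fun_prop)
  rw [integral_map L.continuous.aemeasurable hcont.aestronglyMeasurable,
    integral_map L.continuous.aemeasurable hcont.aestronglyMeasurable]
  exact h (w • L) θ

end NormedSpace

end MeasureTheory

theorem stmt5_general
    (μ : MeasureTheory.SignedMeasure (Fin 2 → ℝ))
    (σ : ℝ → ℝ) (hσ : ∀ t, σ t = 1 / (1 + Real.exp (-t)))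
    (hvanish : ∀ (y : Fin 2 → ℝ) (θ : ℝ),
      (∫ x, σ (y ⬝ᵥ x + θ) ∂μ.toJordanDecomposition.posPart)
        - (∫ x, σ (y ⬝ᵥ x + θ) ∂μ.toJordanDecomposition.negPart) = 0) :
    μ = 0 := by
  obtain rfl : σ = sigmoid := funext fun t ↦ by rw [hσ, sigmoid_def, one_div]
  have hPN : μ.toJordanDecomposition.posPart = μ.toJordanDecomposition.negPart :=
    Measure.ext_of_integral_sigmoid_strongDual_eq fun L θ ↦ by
      simpa only [← StrongDual.apply_eq_dotProduct L, sub_eq_zero]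
        using hvanish (fun i ↦ L (Pi.single i 1)) θ
  rw [← μ.toSignedMeasure_toJordanDecomposition, JordanDecomposition.toSignedMeasure]
  simp only [hPN, sub_self]

/-- The sigmoid `σ(t) = 1/(1+e^{−t})` is discriminatory on a
compact set `K ⊂ ℝ²`: if `μ` is a finite signed Borel measure supported in `K`
with `∫_K σ(yᵀx + θ) dμ(x) = 0` for all `y ∈ ℝ²`, `θ ∈ ℝ`, then `μ = 0`. -/
theorem stmt5
    (K : Set (Fin 2 → ℝ)) (hK : IsCompact K)
    (μ : MeasureTheory.SignedMeasure (Fin 2 → ℝ))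
    (hsupp_pos : μ.toJordanDecomposition.posPart Kᶜ = 0)
    (hsupp_neg : μ.toJordanDecomposition.negPart Kᶜ = 0)
    (σ : ℝ → ℝ) (hσ : ∀ t, σ t = 1 / (1 + Real.exp (-t)))
    (hvanish : ∀ (y : Fin 2 → ℝ) (θ : ℝ),
      (∫ x, σ (y ⬝ᵥ x + θ) ∂μ.toJordanDecomposition.posPart)
        - (∫ x, σ (y ⬝ᵥ x + θ) ∂μ.toJordanDecomposition.negPart) = 0) :
    μ = 0 :=
  stmt5_general μ σ hσ hvanish
end

section
/- Let μ be a signed finite regular Borel measure on a compact set K ⊂ ℝ² such that μ(Π_{y,θ}) = 0 and μ(H_{y,θ}) = 0 for every y ∈ ℝ² and θ ∈ ℝ, where Π_{y,θ} = {x ∈ K : yᵀx + θ = 0} and H_{y,θ} = {x ∈ K : yᵀx + θ > 0}. Then the Fourier transform of μ vanishes identically, and hence μ = 0. -/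
open MeasureTheory Matrix

section Stmt6Aux

open Set
open scoped NNReal ENNReal

noncomputable section

private lemma stmt6_dot_cont (y : Fin 2 → ℝ) : Continuous fun x : Fin 2 → ℝ => y ⬝ᵥ x := by
  simp only [dotProduct]
  exact continuous_finset_sum _ fun i _ => continuous_const.mul (continuous_apply i)

private def stmt6_cosF (K : Set (Fin 2 → ℝ)) (y : Fin 2 → ℝ) : C(K, ℝ) :=
  ⟨fun x => Real.cos (y ⬝ᵥ (x : Fin 2 → ℝ)),
    Real.continuous_cos.comp ((stmt6_dot_cont y).comp continuous_subtype_val)⟩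

private def stmt6_sinF (K : Set (Fin 2 → ℝ)) (y : Fin 2 → ℝ) : C(K, ℝ) :=
  ⟨fun x => Real.sin (y ⬝ᵥ (x : Fin 2 → ℝ)),
    Real.continuous_sin.comp ((stmt6_dot_cont y).comp continuous_subtype_val)⟩

private def stmt6_trigS (K : Set (Fin 2 → ℝ)) : Set C(K, ℝ) :=
  range (stmt6_cosF K) ∪ range (stmt6_sinF K)

private lemma stmt6_one_mem_trig (K : Set (Fin 2 → ℝ)) : (1 : C(K, ℝ)) ∈ stmt6_trigS K := by
  left
  refine ⟨0, ?_⟩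
  ext x
  simp [stmt6_cosF]

private lemma stmt6_mul_base (K : Set (Fin 2 → ℝ)) : ∀ f ∈ stmt6_trigS K, ∀ g ∈ stmt6_trigS K,
    f * g ∈ Submodule.span ℝ (stmt6_trigS K) := by
  rintro f (⟨y, rfl⟩ | ⟨y, rfl⟩) g (⟨z, rfl⟩ | ⟨z, rfl⟩)
  · have : stmt6_cosF K y * stmt6_cosF K z
        = (1/2 : ℝ) • stmt6_cosF K (y - z) + (1/2 : ℝ) • stmt6_cosF K (y + z) := by
      ext x
      simp only [ContinuousMap.mul_apply, ContinuousMap.add_apply, ContinuousMap.smul_apply,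
        stmt6_cosF, ContinuousMap.coe_mk, smul_eq_mul, sub_dotProduct, add_dotProduct,
        Real.cos_sub, Real.cos_add]
      ring
    rw [this]
    exact Submodule.add_mem _
      (Submodule.smul_mem _ _ (Submodule.subset_span (Or.inl ⟨y - z, rfl⟩)))
      (Submodule.smul_mem _ _ (Submodule.subset_span (Or.inl ⟨y + z, rfl⟩)))
  · have : stmt6_cosF K y * stmt6_sinF K z
        = (1/2 : ℝ) • stmt6_sinF K (y + z) - (1/2 : ℝ) • stmt6_sinF K (y - z) := by
      ext x
      simp only [ContinuousMap.mul_apply, ContinuousMap.sub_apply, ContinuousMap.smul_apply,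
        stmt6_cosF, stmt6_sinF, ContinuousMap.coe_mk, smul_eq_mul, sub_dotProduct,
        add_dotProduct, Real.sin_sub, Real.sin_add]
      ring
    rw [this]
    exact Submodule.sub_mem _
      (Submodule.smul_mem _ _ (Submodule.subset_span (Or.inr ⟨y + z, rfl⟩)))
      (Submodule.smul_mem _ _ (Submodule.subset_span (Or.inr ⟨y - z, rfl⟩)))
  · have : stmt6_sinF K y * stmt6_cosF K z
        = (1/2 : ℝ) • stmt6_sinF K (y + z) + (1/2 : ℝ) • stmt6_sinF K (y - z) := by
      ext x
      simp only [ContinuousMap.mul_apply, ContinuousMap.add_apply, ContinuousMap.smul_apply,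
        stmt6_cosF, stmt6_sinF, ContinuousMap.coe_mk, smul_eq_mul, sub_dotProduct,
        add_dotProduct, Real.sin_sub, Real.sin_add]
      ring
    rw [this]
    exact Submodule.add_mem _
      (Submodule.smul_mem _ _ (Submodule.subset_span (Or.inr ⟨y + z, rfl⟩)))
      (Submodule.smul_mem _ _ (Submodule.subset_span (Or.inr ⟨y - z, rfl⟩)))
  · have : stmt6_sinF K y * stmt6_sinF K z
        = (1/2 : ℝ) • stmt6_cosF K (y - z) - (1/2 : ℝ) • stmt6_cosF K (y + z) := by
      ext x
      simp only [ContinuousMap.mul_apply, ContinuousMap.sub_apply, ContinuousMap.smul_apply,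
        stmt6_cosF, stmt6_sinF, ContinuousMap.coe_mk, smul_eq_mul, sub_dotProduct,
        add_dotProduct, Real.cos_sub, Real.cos_add]
      ring
    rw [this]
    exact Submodule.sub_mem _
      (Submodule.smul_mem _ _ (Submodule.subset_span (Or.inl ⟨y - z, rfl⟩)))
      (Submodule.smul_mem _ _ (Submodule.subset_span (Or.inl ⟨y + z, rfl⟩)))

private lemma stmt6_mul_span (K : Set (Fin 2 → ℝ)) :
    ∀ f ∈ Submodule.span ℝ (stmt6_trigS K), ∀ g ∈ Submodule.span ℝ (stmt6_trigS K),
    f * g ∈ Submodule.span ℝ (stmt6_trigS K) := by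
  intro f hf
  induction hf using Submodule.span_induction with
  | mem f hfS =>
    intro g hg
    induction hg using Submodule.span_induction with
    | mem g hgS => exact stmt6_mul_base K f hfS g hgS
    | zero => simp only [mul_zero]; exact Submodule.zero_mem _
    | add a b _ _ ha hb => rw [mul_add]; exact Submodule.add_mem _ ha hb
    | smul c a _ ha => rw [mul_smul_comm]; exact Submodule.smul_mem _ _ ha
  | zero => intro g hg; simp only [zero_mul]; exact Submodule.zero_mem _
  | add a b _ _ ha hb => intro g hg; rw [add_mul]; exact Submodule.add_mem _ (ha g hg) (hb g hg)
  | smul c a _ ha => intro g hg; rw [smul_mul_assoc]; exact Submodule.smul_mem _ _ (ha g hg)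

private lemma stmt6_adjoin_sub_span (K : Set (Fin 2 → ℝ)) :
    ∀ f ∈ Algebra.adjoin ℝ (stmt6_trigS K), f ∈ Submodule.span ℝ (stmt6_trigS K) := by
  intro f hf
  induction hf using Algebra.adjoin_induction with
  | mem f hfS => exact Submodule.subset_span hfS
  | algebraMap r =>
    rw [Algebra.algebraMap_eq_smul_one]
    exact Submodule.smul_mem _ _ (Submodule.subset_span (stmt6_one_mem_trig K))
  | add a b _ _ ha hb => exact Submodule.add_mem _ ha hb
  | mul a b _ _ ha hb => exact stmt6_mul_span K a ha b hb

private lemma stmt6_trig_sep (K : Set (Fin 2 → ℝ)) :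
    (Algebra.adjoin ℝ (stmt6_trigS K)).SeparatesPoints := by
  intro x z hxz
  have hne : (x : Fin 2 → ℝ) ≠ (z : Fin 2 → ℝ) := fun h => hxz (Subtype.coe_injective h)
  obtain ⟨i, hi⟩ : ∃ i, (x : Fin 2 → ℝ) i ≠ (z : Fin 2 → ℝ) i := by
    by_contra h; push_neg at h; exact hne (funext h)
  set y0 : Fin 2 → ℝ := Pi.single i 1 with hy0
  set a : ℝ := (x : Fin 2 → ℝ) i with ha
  set b : ℝ := (z : Fin 2 → ℝ) i with hb
  have hax : y0 ⬝ᵥ (x : Fin 2 → ℝ) = a := by rw [hy0, single_dotProduct, one_mul]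
  have hbz : y0 ⬝ᵥ (z : Fin 2 → ℝ) = b := by rw [hy0, single_dotProduct, one_mul]
  have hab : b - a ≠ 0 := sub_ne_zero.2 (Ne.symm hi)
  set c : ℝ := Real.pi / 2 / (b - a) with hc
  set f : C(K, ℝ) :=
    Real.cos (c * a) • stmt6_sinF K (c • y0) - Real.sin (c * a) • stmt6_cosF K (c • y0) with hf
  have hfmem : f ∈ Algebra.adjoin ℝ (stmt6_trigS K) := by
    apply sub_mem
    · exact (Algebra.adjoin ℝ (stmt6_trigS K)).smul_mem
        (Algebra.subset_adjoin (Or.inr ⟨_, rfl⟩)) _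
    · exact (Algebra.adjoin ℝ (stmt6_trigS K)).smul_mem
        (Algebra.subset_adjoin (Or.inl ⟨_, rfl⟩)) _
  have hfw : ∀ w : K, f w = Real.sin (c * (y0 ⬝ᵥ (w : Fin 2 → ℝ)) - c * a) := by
    intro w
    simp only [hf, ContinuousMap.sub_apply, ContinuousMap.smul_apply, stmt6_sinF, stmt6_cosF,
      ContinuousMap.coe_mk, smul_eq_mul, smul_dotProduct, Real.sin_sub]
    ring
  refine ⟨f, ⟨f, hfmem, rfl⟩, ?_⟩
  rw [hfw x, hfw z, hax, hbz]
  have h1 : c * a - c * a = 0 := by ring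
  have h2 : c * b - c * a = Real.pi / 2 := by
    rw [hc]; field_simp
  rw [h1, h2, Real.sin_zero, Real.sin_pi_div_two]
  exact zero_ne_one

/-- Key step: two finite measures supported in the compact set `K` that agree on all
half-planes (intersected with `K`) and on `K` itself are equal. -/
private lemma stmt6_key (K : Set (Fin 2 → ℝ)) (hK : IsCompact K)
    (p q : Measure (Fin 2 → ℝ)) [IsFiniteMeasure p] [IsFiniteMeasure q]
    (hpK : p Kᶜ = 0) (hqK : q Kᶜ = 0)
    (heq : ∀ (y : Fin 2 → ℝ) (a : ℝ), p {x | x ∈ K ∧ a < y ⬝ᵥ x} = q {x | x ∈ K ∧ a < y ⬝ᵥ x})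
    (htot : p K = q K) : p = q := by
  classical
  have hKc : MeasurableSet K := hK.isClosed.measurableSet
  haveI : CompactSpace K := isCompact_iff_compactSpace.mp hK
  set P : Measure K := p.comap Subtype.val with hP
  set Q : Measure K := q.comap Subtype.val with hQ
  have himg : ∀ s : Set K, MeasurableSet s → MeasurableSet (Subtype.val '' s) :=
    fun s hs => MeasurableSet.subtype_image hKc hs
  have hPapp : ∀ s : Set K, MeasurableSet s → P s = p (Subtype.val '' s) :=
    fun s hs => Measure.comap_apply _ Subtype.val_injective himg p hs
  have hQapp : ∀ s : Set K, MeasurableSet s → Q s = q (Subtype.val '' s) :=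
    fun s hs => Measure.comap_apply _ Subtype.val_injective himg q hs
  haveI : IsFiniteMeasure P := by
    constructor
    rw [hPapp univ MeasurableSet.univ]
    exact measure_lt_top p _
  haveI : IsFiniteMeasure Q := by
    constructor
    rw [hQapp univ MeasurableSet.univ]
    exact measure_lt_top q _
  have hTcont : ∀ y : Fin 2 → ℝ, Continuous fun x : K => y ⬝ᵥ (x : Fin 2 → ℝ) :=
    fun y => (stmt6_dot_cont y).comp continuous_subtype_val
  have hTmeas : ∀ y : Fin 2 → ℝ, Measurable fun x : K => y ⬝ᵥ (x : Fin 2 → ℝ) :=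
    fun y => (hTcont y).measurable
  have himgIoi : ∀ (y : Fin 2 → ℝ) (a : ℝ),
      Subtype.val '' ((fun x : K => y ⬝ᵥ (x : Fin 2 → ℝ)) ⁻¹' Ioi a)
        = {x | x ∈ K ∧ a < y ⬝ᵥ x} := by
    intro y a
    ext z
    simp [Set.mem_image, Subtype.exists]
    tauto
  have hmap : ∀ y : Fin 2 → ℝ,
      Measure.map (fun x : K => y ⬝ᵥ (x : Fin 2 → ℝ)) P
        = Measure.map (fun x : K => y ⬝ᵥ (x : Fin 2 → ℝ)) Q := by
    intro y
    refine ext_of_generate_finite (range Ioi) ?_ isPiSystem_Ioi ?_ ?_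
    · rw [BorelSpace.measurable_eq (α := ℝ)]
      exact borel_eq_generateFrom_Ioi ℝ
    · rintro s ⟨a, rfl⟩
      rw [Measure.map_apply (hTmeas y) measurableSet_Ioi,
        Measure.map_apply (hTmeas y) measurableSet_Ioi,
        hPapp _ ((hTmeas y) measurableSet_Ioi),
        hQapp _ ((hTmeas y) measurableSet_Ioi), himgIoi]
      exact heq y a
    · rw [Measure.map_apply (hTmeas y) MeasurableSet.univ,
        Measure.map_apply (hTmeas y) MeasurableSet.univ]
      simp only [Set.preimage_univ]
      rw [hPapp _ MeasurableSet.univ, hQapp _ MeasurableSet.univ]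
      simpa [Set.image_univ, Subtype.range_coe] using htot
  have hgen : ∀ (y : Fin 2 → ℝ) (g : ℝ → ℝ), Continuous g →
      ∫ x : K, g (y ⬝ᵥ (x : Fin 2 → ℝ)) ∂P = ∫ x : K, g (y ⬝ᵥ (x : Fin 2 → ℝ)) ∂Q := by
    intro y g hg
    rw [← integral_map (hTmeas y).aemeasurable hg.aestronglyMeasurable, hmap y,
      integral_map (hTmeas y).aemeasurable hg.aestronglyMeasurable]
  have hInt : ∀ (μ : Measure K) [IsFiniteMeasure μ] (f : C(K, ℝ)),
      Integrable (fun x => f x) μ := by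
    intro μ _ f
    exact f.continuous.integrable_of_hasCompactSupport
      (IsCompact.of_isClosed_subset isCompact_univ (isClosed_tsupport _) (subset_univ _))
  have hspan_int : ∀ f ∈ Submodule.span ℝ (stmt6_trigS K),
      ∫ x, f x ∂P = ∫ x, f x ∂Q := by
    intro f hf
    induction hf using Submodule.span_induction with
    | mem f hfS =>
      rcases hfS with ⟨y, rfl⟩ | ⟨y, rfl⟩
      · exact hgen y Real.cos Real.continuous_cos
      · exact hgen y Real.sin Real.continuous_sin
    | zero => simp
    | add a b _ _ ha hb =>
      simp only [ContinuousMap.add_apply]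
      rw [integral_add (hInt P a) (hInt P b), integral_add (hInt Q a) (hInt Q b), ha, hb]
    | smul c a _ ha =>
      simp only [ContinuousMap.smul_apply, smul_eq_mul]
      rw [integral_const_mul, integral_const_mul, ha]
  have hcm : ∀ f : C(K, ℝ), ∫ x, f x ∂P = ∫ x, f x ∂Q := by
    intro f
    by_contra hne
    set d : ℝ := ∫ x, f x ∂P - ∫ x, f x ∂Q with hd
    have hd0 : 0 < |d| := abs_pos.2 (sub_ne_zero.2 hne)
    set C : ℝ := (P univ).toReal + (Q univ).toReal with hC
    have hC0 : 0 ≤ C := add_nonneg ENNReal.toReal_nonneg ENNReal.toReal_nonneg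
    have hδ : 0 < |d| / (2 * (C + 1)) := by positivity
    obtain ⟨g, hg⟩ := ContinuousMap.exists_mem_subalgebra_near_continuousMap_of_separatesPoints
      (Algebra.adjoin ℝ (stmt6_trigS K)) (stmt6_trig_sep K) f (|d| / (2 * (C + 1))) hδ
    have hgint : ∫ x, (g : C(K, ℝ)) x ∂P = ∫ x, (g : C(K, ℝ)) x ∂Q :=
      hspan_int _ (stmt6_adjoin_sub_span K _ g.2)
    have hbound : ∀ (μ : Measure K) [IsFiniteMeasure μ],
        |∫ x, f x ∂μ - ∫ x, (g : C(K, ℝ)) x ∂μ| ≤ (|d| / (2 * (C + 1))) * (μ univ).toReal := by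
      intro μ _
      rw [← integral_sub (hInt μ f) (hInt μ _), ← Real.norm_eq_abs]
      apply norm_integral_le_of_norm_le_const
      filter_upwards with x
      have h1 : ‖(f - (g : C(K, ℝ))) x‖ ≤ ‖f - (g : C(K, ℝ))‖ :=
        ContinuousMap.norm_coe_le_norm _ x
      have h2 : ‖f - (g : C(K, ℝ))‖ < |d| / (2 * (C + 1)) := by
        rw [← norm_neg]; simpa [neg_sub] using hg
      simp only [ContinuousMap.sub_apply] at h1
      exact le_trans h1 h2.le
    have hdd : d = (∫ x, f x ∂P - ∫ x, (g : C(K, ℝ)) x ∂P)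
        - (∫ x, f x ∂Q - ∫ x, (g : C(K, ℝ)) x ∂Q) := by
      rw [hd, hgint]; ring
    have key : |(∫ x, f x ∂P - ∫ x, (g : C(K, ℝ)) x ∂P)
        - (∫ x, f x ∂Q - ∫ x, (g : C(K, ℝ)) x ∂Q)| ≤ (|d| / (2 * (C + 1))) * C :=
      calc |(∫ x, f x ∂P - ∫ x, (g : C(K, ℝ)) x ∂P)
          - (∫ x, f x ∂Q - ∫ x, (g : C(K, ℝ)) x ∂Q)|
          ≤ |∫ x, f x ∂P - ∫ x, (g : C(K, ℝ)) x ∂P|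
            + |∫ x, f x ∂Q - ∫ x, (g : C(K, ℝ)) x ∂Q| := abs_sub _ _
        _ ≤ (|d| / (2 * (C + 1))) * (P univ).toReal
            + (|d| / (2 * (C + 1))) * (Q univ).toReal := add_le_add (hbound P) (hbound Q)
        _ = (|d| / (2 * (C + 1))) * C := by rw [hC]; ring
    have habs : |d| = |(∫ x, f x ∂P - ∫ x, (g : C(K, ℝ)) x ∂P)
        - (∫ x, f x ∂Q - ∫ x, (g : C(K, ℝ)) x ∂Q)| := by rw [hdd]
    have hlt : (|d| / (2 * (C + 1))) * C < |d| := by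
      rw [div_mul_eq_mul_div, div_lt_iff₀ (by positivity)]
      nlinarith
    linarith
  have hPQ : P = Q := by
    apply ext_of_forall_lintegral_eq_of_IsFiniteMeasure
    intro f
    have hf' : Continuous fun x : K => ((f x : ℝ≥0) : ℝ) :=
      NNReal.continuous_coe.comp f.continuous
    have h := hcm (ContinuousMap.mk _ hf')
    simp only [ContinuousMap.coe_mk] at h
    have hiP : Integrable (fun x : K => ((f x : ℝ≥0) : ℝ)) P := by
      simpa using hInt P (ContinuousMap.mk _ hf')
    have hiQ : Integrable (fun x : K => ((f x : ℝ≥0) : ℝ)) Q := by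
      simpa using hInt Q (ContinuousMap.mk _ hf')
    rw [lintegral_coe_eq_integral (fun x => f x) hiP,
      lintegral_coe_eq_integral (fun x => f x) hiQ, h]
  -- conclude equality of `p` and `q`
  have hrestrict : ∀ (m : Measure (Fin 2 → ℝ)), m Kᶜ = 0 → ∀ s : Set (Fin 2 → ℝ),
      m s = m (K ∩ s) := by
    intro m hm s
    refine le_antisymm ?_ (measure_mono Set.inter_subset_right)
    calc m s ≤ m ((K ∩ s) ∪ Kᶜ) := measure_mono (fun x hx => by
          by_cases hxK : x ∈ K
          · exact Or.inl ⟨hxK, hx⟩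
          · exact Or.inr hxK)
      _ ≤ m (K ∩ s) + m Kᶜ := measure_union_le _ _
      _ = m (K ∩ s) := by rw [hm, add_zero]
  ext s hs
  have hps : Subtype.val '' (Subtype.val ⁻¹' s : Set K) = K ∩ s :=
    Subtype.image_preimage_coe K s
  calc p s = p (K ∩ s) := hrestrict p hpK s
    _ = P (Subtype.val ⁻¹' s) := by rw [hPapp _ (measurable_subtype_coe hs), hps]
    _ = Q (Subtype.val ⁻¹' s) := by rw [hPQ]
    _ = q (K ∩ s) := by rw [hQapp _ (measurable_subtype_coe hs), hps]
    _ = q s := (hrestrict q hqK s).symm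

private lemma stmt6_jd_eq (μ : MeasureTheory.SignedMeasure (Fin 2 → ℝ)) {s : Set (Fin 2 → ℝ)}
    (hs : MeasurableSet s) (h : μ s = 0) :
    μ.toJordanDecomposition.posPart s = μ.toJordanDecomposition.negPart s := by
  have h2 : μ.toJordanDecomposition.toSignedMeasure s = 0 := by
    rw [μ.toSignedMeasure_toJordanDecomposition]; exact h
  rw [JordanDecomposition.toSignedMeasure, VectorMeasure.sub_apply,
    Measure.toSignedMeasure_apply_measurable hs,
    Measure.toSignedMeasure_apply_measurable hs, sub_eq_zero] at h2
  exact (ENNReal.toReal_eq_toReal_iff' (measure_ne_top _ s) (measure_ne_top _ s)).mp h2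

end

end Stmt6Aux

/-- If a finite signed Borel measure `μ` supported in a compact
`K ⊂ ℝ²` vanishes on every line `Π_{y,θ} = {x ∈ K : yᵀx + θ = 0}` and every
open half-plane `H_{y,θ} = {x ∈ K : yᵀx + θ > 0}`, then its Fourier transform
`μ̂(ξ) = ∫_K e^{−iξᵀx} dμ(x)` vanishes identically, and hence `μ = 0`. -/
theorem stmt6
    (K : Set (Fin 2 → ℝ)) (hK : IsCompact K)
    (μ : MeasureTheory.SignedMeasure (Fin 2 → ℝ))
    (hsupp_pos : μ.toJordanDecomposition.posPart Kᶜ = 0)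
    (hsupp_neg : μ.toJordanDecomposition.negPart Kᶜ = 0)
    (hline : ∀ (y : Fin 2 → ℝ) (θ : ℝ), μ {x | x ∈ K ∧ y ⬝ᵥ x + θ = 0} = 0)
    (hhalf : ∀ (y : Fin 2 → ℝ) (θ : ℝ), μ {x | x ∈ K ∧ y ⬝ᵥ x + θ > 0} = 0) :
    (∀ ξ : Fin 2 → ℝ,
      (∫ x, Complex.exp (-Complex.I * (ξ ⬝ᵥ x : ℝ))
          ∂μ.toJordanDecomposition.posPart)
        - (∫ x, Complex.exp (-Complex.I * (ξ ⬝ᵥ x : ℝ))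
            ∂μ.toJordanDecomposition.negPart) = 0) ∧
    μ = 0 := by
  classical
  have hKc : MeasurableSet K := hK.isClosed.measurableSet
  set p := μ.toJordanDecomposition.posPart with hp
  set q := μ.toJordanDecomposition.negPart with hq
  have hhalfmeas : ∀ (y : Fin 2 → ℝ) (a : ℝ), MeasurableSet {x | x ∈ K ∧ a < y ⬝ᵥ x} := by
    intro y a
    exact hKc.inter ((stmt6_dot_cont y).measurable measurableSet_Ioi)
  have heq : ∀ (y : Fin 2 → ℝ) (a : ℝ),
      p {x | x ∈ K ∧ a < y ⬝ᵥ x} = q {x | x ∈ K ∧ a < y ⬝ᵥ x} := by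
    intro y a
    apply stmt6_jd_eq μ (hhalfmeas y a)
    have hset : {x | x ∈ K ∧ y ⬝ᵥ x + (-a) > 0} = {x | x ∈ K ∧ a < y ⬝ᵥ x} := by
      ext x
      simp only [Set.mem_setOf_eq, gt_iff_lt, ← sub_eq_add_neg, sub_pos]
    have := hhalf y (-a)
    rwa [hset] at this
  have hKset : {x | x ∈ K ∧ (0 : Fin 2 → ℝ) ⬝ᵥ x + 0 = 0} = K := by
    ext x
    simp [zero_dotProduct]
  have htot : p K = q K := by
    apply stmt6_jd_eq μ hKc
    have := hline 0 0
    rwa [hKset] at this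
  have hpq : p = q := stmt6_key K hK p q hsupp_pos hsupp_neg heq htot
  refine ⟨fun ξ => by rw [hpq, sub_self], ?_⟩
  have hrepr : p.toSignedMeasure - q.toSignedMeasure = μ :=
    μ.toSignedMeasure_toJordanDecomposition
  ext s hs
  rw [← hrepr, MeasureTheory.VectorMeasure.sub_apply,
    MeasureTheory.Measure.toSignedMeasure_apply_measurable hs,
    MeasureTheory.Measure.toSignedMeasure_apply_measurable hs, hpq, sub_self,
    MeasureTheory.VectorMeasure.zero_apply]
end

section
/- Let S ⊂ ℝ² be a bounded open set and let A_det = {v ∈ W^{2,2}(S) : det(∇²v) = 0 a.e. in S}. Then the linear span of A_det is dense in L²(S). -/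
/-!
For a continuous linear functional `ℓ`, the Hessian of `x ↦ exp (ℓ x)` is `exp (ℓ x) • ℓ ⊗ ℓ`,
which has rank one, so its determinant vanishes. These exponentials are closed under products and
separate points, so by Stone–Weierstrass their span is uniformly dense in the continuous functions
on the compact set `closure S`. As `S` has finite measure, uniform approximation on `S` gives
approximation in `L²(S)`, where bounded continuous functions are dense.
-/

open MeasureTheory Real

section ExpLinear

variable {E : Type*} [NormedAddCommGroup E] [NormedSpace ℝ E]

lemma fderiv_exp_comp_clm_apply (ℓ : StrongDual ℝ E) (u : E) :
    (fun z => fderiv ℝ (fun y => exp (ℓ y)) z u) = fun z => ℓ u * exp (ℓ z) := by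
  ext z
  simp [ℓ.hasFDerivAt.exp.fderiv, mul_comm]

lemma fderiv_fderiv_exp_comp_clm_apply (ℓ : StrongDual ℝ E) (u w x : E) :
    fderiv ℝ (fun z => fderiv ℝ (fun y => exp (ℓ y)) z u) x w = ℓ u * ℓ w * exp (ℓ x) := by
  rw [fderiv_exp_comp_clm_apply, (ℓ.hasFDerivAt.exp.const_mul (ℓ u)).fderiv]
  simp only [smul_apply, smul_eq_mul]
  ring

lemma det_hessian_exp_comp_clm (ℓ : StrongDual ℝ (Fin 2 → ℝ)) (x : Fin 2 → ℝ) :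
    Matrix.det (Matrix.of fun i j : Fin 2 =>
      fderiv ℝ (fun z => fderiv ℝ (fun y => exp (ℓ y)) z (Pi.single j 1)) x
        (Pi.single i 1)) = 0 := by
  simp only [Matrix.det_fin_two, Matrix.of_apply, fderiv_fderiv_exp_comp_clm_apply]
  ring

noncomputable def expLinear (ℓ : StrongDual ℝ E) : C(E, ℝ) := ⟨fun x => exp (ℓ x), by fun_prop⟩

@[simp]
lemma expLinear_apply (ℓ : StrongDual ℝ E) (x : E) : expLinear ℓ x = exp (ℓ x) := rfl

lemma expLinear_add (ℓ ℓ' : StrongDual ℝ E) :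
    expLinear (ℓ + ℓ') = expLinear ℓ * expLinear ℓ' := by
  ext x
  simp [exp_add]

lemma expLinear_zero : expLinear (0 : StrongDual ℝ E) = 1 := by
  ext x
  simp

lemma adjoin_range_expLinear :
    Subalgebra.toSubmodule (Algebra.adjoin ℝ (Set.range (expLinear (E := E))))
      = Submodule.span ℝ (Set.range expLinear) := by
  let M : Submonoid C(E, ℝ) :=
    { carrier := Set.range expLinear
      mul_mem' := by
        rintro _ _ ⟨ℓ, rfl⟩ ⟨ℓ', rfl⟩
        exact ⟨ℓ + ℓ', expLinear_add ℓ ℓ'⟩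
      one_mem' := ⟨0, expLinear_zero⟩ }
  refine Algebra.adjoin_eq_span_of_subset (R := ℝ) fun p hp => Submodule.subset_span ?_
  exact Submonoid.closure_le (S := M) |>.mpr le_rfl hp

lemma separatesPoints_adjoin_range_expLinear :
    (Algebra.adjoin ℝ (Set.range (expLinear (E := E)))).SeparatesPoints := by
  intro x y hxy
  obtain ⟨ℓ, hℓ⟩ := SeparatingDual.exists_separating_of_ne (R := ℝ) hxy
  exact ⟨_, ⟨expLinear ℓ, Algebra.subset_adjoin ⟨ℓ, rfl⟩, rfl⟩, by simpa using hℓ⟩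

lemma exists_sum_exp_near_of_isCompact (f : C(E, ℝ)) {K : Set E} (hK : IsCompact K)
    {δ : ℝ} (hδ : 0 < δ) :
    ∃ (n : ℕ) (c : Fin n → ℝ) (ℓ : Fin n → StrongDual ℝ E),
      ∀ x ∈ K, ‖f x - ∑ k, c k * exp (ℓ k x)‖ < δ := by
  obtain ⟨p, hp, hpf⟩ :=
    ContinuousMap.exists_mem_subalgebra_near_continuous_of_isCompact_of_separatesPoints
      separatesPoints_adjoin_range_expLinear f hK hδ
  rw [← Subalgebra.mem_toSubmodule, adjoin_range_expLinear, Submodule.mem_span_set'] at hp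
  obtain ⟨n, c, q, rfl⟩ := hp
  choose ℓ hℓ using fun k => (q k).2
  refine ⟨n, c, ℓ, fun x hx => ?_⟩
  rw [norm_sub_rev]
  simpa [← hℓ] using hpf x hx

end ExpLinear

section FiniteMeasure

variable {α F : Type*} [MeasurableSpace α] [NormedAddCommGroup F]

lemma exists_pos_eLpNorm_lt_of_ae_norm_le (μ : Measure α) [IsFiniteMeasure μ] (p : ENNReal)
    {ε : ENNReal} (hε : ε ≠ 0) :
    ∃ δ : ℝ, 0 < δ ∧ ∀ h : α → F, (∀ᵐ x ∂μ, ‖h x‖ ≤ δ) → eLpNorm h p μ < ε := by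
  have hfin : μ Set.univ ^ p.toReal⁻¹ ≠ ⊤ :=
    ENNReal.rpow_ne_top_of_nonneg (inv_nonneg.mpr ENNReal.toReal_nonneg) (measure_ne_top μ _)
  obtain ⟨δ, hδ, hδε⟩ := ENNReal.exists_nnreal_pos_mul_lt hfin hε
  refine ⟨δ, hδ, fun h hh => (eLpNorm_le_of_ae_bound hh).trans_lt ?_⟩
  rwa [ENNReal.ofReal_coe_nnreal, mul_comm]

end FiniteMeasure

theorem stmt8_general
    (S : Set (Fin 2 → ℝ)) (hSbdd : Bornology.IsBounded S)
    (g : (Fin 2 → ℝ) → ℝ) (hg : MemLp g 2 (volume.restrict S)) :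
    ∀ ε : ℝ, 0 < ε →
      ∃ (n : ℕ) (c : Fin n → ℝ) (v : Fin n → ((Fin 2 → ℝ) → ℝ)),
        (∀ k, ContDiff ℝ 2 (v k) ∧ ∀ x ∈ S,
          Matrix.det (Matrix.of fun i j : Fin 2 =>
            fderiv ℝ (fun z => fderiv ℝ (v k) z (Pi.single j 1)) x
              (Pi.single i 1)) = 0) ∧
        eLpNorm (fun x => g x - ∑ k, c k * v k x) 2 (volume.restrict S)
          < ENNReal.ofReal ε := by
  intro ε hε
  have hε2 : ENNReal.ofReal (ε / 2) ≠ 0 := by simp [hε]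
  have : IsFiniteMeasure (volume.restrict S) := isFiniteMeasure_restrict.mpr hSbdd.measure_lt_top.ne
  obtain ⟨f, hgf, -⟩ := hg.exists_boundedContinuous_eLpNorm_sub_le ENNReal.ofNat_ne_top hε2
  obtain ⟨δ, hδ, hδε⟩ := exists_pos_eLpNorm_lt_of_ae_norm_le (F := ℝ) (volume.restrict S) 2 hε2
  obtain ⟨n, c, ℓ, hfℓ⟩ :=
    exists_sum_exp_near_of_isCompact f.toContinuousMap hSbdd.isCompact_closure hδ
  refine ⟨n, c, fun k x => exp (ℓ k x),
    fun k => ⟨by fun_prop, fun x _ => det_hessian_exp_comp_clm (ℓ k) x⟩, ?_⟩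
  have hf_near : eLpNorm (fun x => f x - ∑ k, c k * exp (ℓ k x)) 2 (volume.restrict S)
      < ENNReal.ofReal (ε / 2) :=
    hδε _ <| ae_restrict_of_ae_restrict_of_subset subset_closure <|
      ae_restrict_of_forall_mem isClosed_closure.measurableSet fun x hx => (hfℓ x hx).le
  calc eLpNorm (fun x => g x - ∑ k, c k * exp (ℓ k x)) 2 (volume.restrict S)
      ≤ eLpNorm (fun x => g x - f x) 2 (volume.restrict S)
        + eLpNorm (fun x => f x - ∑ k, c k * exp (ℓ k x)) 2 (volume.restrict S) := by
        refine le_of_eq_of_le ?_ (eLpNorm_add_le (hg.1.sub f.continuous.aestronglyMeasurable)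
          (by fun_prop) one_le_two)
        congr with x
        simp
    _ < ENNReal.ofReal (ε / 2) + ENNReal.ofReal (ε / 2) :=
        ENNReal.add_lt_add_of_le_of_lt (hgf.trans_lt ENNReal.ofReal_lt_top).ne hgf hf_near
    _ = ENNReal.ofReal ε := by rw [← ENNReal.ofReal_add (by positivity) (by positivity), add_halves]

/-- For `S ⊂ ℝ²` bounded open, the span of
`A_det = {v : det(∇²v) = 0 in S}` is dense in `L²(S)`: every `g ∈ L²(S)` is
approximated arbitrarily well in `L²(S)` by finite linear combinations of
functions whose Hessian determinant vanishes on `S`. -/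
theorem stmt8
    (S : Set (Fin 2 → ℝ)) (hSopen : IsOpen S) (hSbdd : Bornology.IsBounded S)
    (g : (Fin 2 → ℝ) → ℝ) (hg : MemLp g 2 (volume.restrict S)) :
    ∀ ε : ℝ, 0 < ε →
      ∃ (n : ℕ) (c : Fin n → ℝ) (v : Fin n → ((Fin 2 → ℝ) → ℝ)),
        (∀ k, ContDiff ℝ 2 (v k) ∧ ∀ x ∈ S,
          Matrix.det (Matrix.of fun i j : Fin 2 =>
            fderiv ℝ (fun z => fderiv ℝ (v k) z (Pi.single j 1)) x
              (Pi.single i 1)) = 0) ∧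
        eLpNorm (fun x => g x - ∑ k, c k * v k x) 2 (volume.restrict S)
          < ENNReal.ofReal ε :=
  stmt8_general S hSbdd g hg
end

section
/- Let v ∈ W^{2,∞}(S) with ‖∇v‖_∞ ≤ 1/2, and let F = √(Id − ∇v ⊗ ∇v) (matrix square root of the 2×2 matrix Id − ∇v ⊗ ∇v). Then det(F) = √(1 − |∇v|²) ≥ 1/2 pointwise, F ∈ W^{1,∞}(S; ℝ^{2×2}), ‖F‖_∞ ≤ C, and ‖∇F‖_∞ ≤ C‖∇²v‖_∞ ‖∇v‖_∞ for a constant C independent of v. -/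
/-!
Since `(u uᵀ)² = |u|² u uᵀ`, the square root of `1 - u uᵀ` can be found in the form
`1 - c u uᵀ`: the quadratic `c² |u|² - 2 c + 1 = 0` has the root `c = (1 + √(1 - |u|²))⁻¹`,
which gives a positive semidefinite matrix of determinant `√(1 - |u|²)`. By uniqueness of
positive semidefinite square roots, `F` is this closed form evaluated at `u = ∇v`. The
coefficient `c` is a smooth function of `|u|²` with derivative at most `1` while `|u|² ≤ 3/4`,
so the derivative of `F` is bounded by a multiple of `|∇v| |∇²v|` by the chain rule.
-/

open Matrix

noncomputable section

def rankOneSqrtCoeff (t : ℝ) : ℝ := (1 + √(1 - t))⁻¹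

lemma rankOneSqrtCoeff_pos (t : ℝ) : 0 < rankOneSqrtCoeff t := by
  unfold rankOneSqrtCoeff; positivity

lemma rankOneSqrtCoeff_le_one (t : ℝ) : rankOneSqrtCoeff t ≤ 1 :=
  inv_le_one_of_one_le₀ (le_add_of_nonneg_right (Real.sqrt_nonneg _))

lemma rankOneSqrtCoeff_mul_eq_one_sub_sqrt {t : ℝ} (ht : t ≤ 1) :
    rankOneSqrtCoeff t * t = 1 - √(1 - t) := by
  have hsq := Real.sq_sqrt (sub_nonneg.2 ht)
  have hpos : 0 < 1 + √(1 - t) := by positivity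
  unfold rankOneSqrtCoeff
  field_simp
  linear_combination hsq

lemma exists_hasDerivAt_rankOneSqrtCoeff_abs_le_one {t : ℝ} (ht : t ≤ 3 / 4) :
    ∃ c', HasDerivAt rankOneSqrtCoeff c' t ∧ |c'| ≤ 1 := by
  have hd : 1 / 2 ≤ √(1 - t) := Real.le_sqrt_of_sq_le (by linarith)
  have hne : 1 + √(1 - t) ≠ 0 := by positivity
  have h := (((hasDerivAt_id t).const_sub 1).sqrt (by simp; linarith)).const_add 1 |>.inv hne
  refine ⟨_, h, ?_⟩
  simp only [id, neg_div, neg_neg]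
  rw [abs_of_nonneg (by positivity), div_le_one (by positivity),
    div_le_iff₀ (by positivity)]
  nlinarith

variable {ι : Type*} [Fintype ι]

lemma sq_le_dotProduct_self (u : ι → ℝ) (i : ι) : u i ^ 2 ≤ u ⬝ᵥ u := by
  simpa [dotProduct, sq] using
    Finset.single_le_sum (f := fun j => u j * u j) (fun j _ => mul_self_nonneg (u j))
      (Finset.mem_univ i)

lemma norm_le_sqrt_dotProduct_self (u : ι → ℝ) : ‖u‖ ≤ √(u ⬝ᵥ u) :=
  (pi_norm_le_iff_of_nonneg (Real.sqrt_nonneg _)).2 fun i =>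
    Real.abs_le_sqrt (sq_le_dotProduct_self u i)

lemma ContinuousLinearMap.norm_proj_le_one (i : ι) :
    ‖ContinuousLinearMap.proj (R := ℝ) (φ := fun _ : ι => ℝ) i‖ ≤ 1 :=
  ContinuousLinearMap.opNorm_le_bound _ zero_le_one fun x => by
    simpa using norm_le_pi_norm x i

lemma norm_smul_proj_add_smul_proj_le (u : ι → ℝ) (i j : ι) :
    ‖u i • ContinuousLinearMap.proj (R := ℝ) (φ := fun _ : ι => ℝ) j +
      u j • ContinuousLinearMap.proj i‖ ≤ 2 * ‖u‖ := by
  have hproj := ContinuousLinearMap.norm_proj_le_one (ι := ι)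
  have hu := norm_le_pi_norm u
  calc _ ≤ ‖u i‖ * ‖ContinuousLinearMap.proj (R := ℝ) (φ := fun _ : ι => ℝ) j‖ +
        ‖u j‖ * ‖ContinuousLinearMap.proj (R := ℝ) (φ := fun _ : ι => ℝ) i‖ :=
        (norm_add_le _ _).trans (add_le_add (norm_smul_le _ _) (norm_smul_le _ _))
    _ ≤ ‖u‖ * 1 + ‖u‖ * 1 := by gcongr <;> simp_all
    _ = 2 * ‖u‖ := by ring

lemma exists_hasFDerivAt_dotProduct_self (u : ι → ℝ) :
    ∃ L : (ι → ℝ) →L[ℝ] ℝ, HasFDerivAt (fun u : ι → ℝ => u ⬝ᵥ u) L u ∧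
      ‖L‖ ≤ 2 * Fintype.card ι * ‖u‖ := by
  have h := HasFDerivAt.fun_sum (u := Finset.univ) fun k _ =>
    (hasFDerivAt_apply (𝕜 := ℝ) k u).mul (hasFDerivAt_apply k u)
  refine ⟨_, h, ?_⟩
  calc _ ≤ ∑ k, ‖u k • ContinuousLinearMap.proj (R := ℝ) (φ := fun _ : ι => ℝ) k +
        u k • ContinuousLinearMap.proj k‖ := norm_sum_le _ _
    _ ≤ ∑ _k : ι, 2 * ‖u‖ := Finset.sum_le_sum fun k _ => norm_smul_proj_add_smul_proj_le u k k
    _ = 2 * Fintype.card ι * ‖u‖ := by simp; ring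

variable [DecidableEq ι]

def sqrtOneSubVecMulVec (u : ι → ℝ) : Matrix ι ι ℝ :=
  1 - rankOneSqrtCoeff (u ⬝ᵥ u) • vecMulVec u u

lemma sqrtOneSubVecMulVec_mul_self {u : ι → ℝ} (hu : u ⬝ᵥ u ≤ 1) :
    sqrtOneSubVecMulVec u * sqrtOneSubVecMulVec u = 1 - vecMulVec u u := by
  set c := rankOneSqrtCoeff (u ⬝ᵥ u)
  have hc : c * (1 + √(1 - u ⬝ᵥ u)) = 1 :=
    inv_mul_cancel₀ (by positivity)
  have hcoeff : 2 * c - c ^ 2 * (u ⬝ᵥ u) = 1 := by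
    linear_combination -c * rankOneSqrtCoeff_mul_eq_one_sub_sqrt hu + hc
  have hsq : vecMulVec u u * vecMulVec u u = (u ⬝ᵥ u) • vecMulVec u u := by
    rw [vecMulVec_mul_vecMulVec, vecMulVec_smul]
  calc sqrtOneSubVecMulVec u * sqrtOneSubVecMulVec u
      = 1 - (2 * c - c ^ 2 * (u ⬝ᵥ u)) • vecMulVec u u := by
        simp only [sqrtOneSubVecMulVec, sub_mul, mul_sub, one_mul, mul_one, smul_mul_smul, hsq]
        module
    _ = 1 - vecMulVec u u := by rw [hcoeff, one_smul]

lemma det_sqrtOneSubVecMulVec {u : ι → ℝ} (hu : u ⬝ᵥ u ≤ 1) :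
    (sqrtOneSubVecMulVec u).det = √(1 - u ⬝ᵥ u) := by
  have h : sqrtOneSubVecMulVec u =
      1 + replicateCol Unit (-rankOneSqrtCoeff (u ⬝ᵥ u) • u) * replicateRow Unit u := by
    rw [← vecMulVec_eq, smul_vecMulVec, sqrtOneSubVecMulVec, neg_smul, sub_eq_add_neg]
  rw [h, det_one_add_replicateCol_mul_replicateRow, dotProduct_smul, smul_eq_mul,
    dotProduct_comm, neg_mul, ← sub_eq_add_neg, rankOneSqrtCoeff_mul_eq_one_sub_sqrt hu,
    sub_sub_cancel]

lemma posSemidef_sqrtOneSubVecMulVec {u : ι → ℝ} (hu : u ⬝ᵥ u ≤ 1) :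
    (sqrtOneSubVecMulVec u).PosSemidef := by
  refine .of_dotProduct_mulVec_nonneg ?_ fun x => ?_
  · simp [IsHermitian, sqrtOneSubVecMulVec]
  · have hcs : (u ⬝ᵥ x) ^ 2 ≤ (u ⬝ᵥ u) * (x ⬝ᵥ x) := by
      simpa [dotProduct, sq] using Finset.sum_mul_sq_le_sq_mul_sq Finset.univ u x
    have hc : rankOneSqrtCoeff (u ⬝ᵥ u) * (u ⬝ᵥ u) ≤ 1 := by
      rw [rankOneSqrtCoeff_mul_eq_one_sub_sqrt hu]; linarith [Real.sqrt_nonneg (1 - u ⬝ᵥ u)]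
    have hx : 0 ≤ x ⬝ᵥ x := by simpa using dotProduct_star_self_nonneg x
    simp only [star_trivial, sqrtOneSubVecMulVec, sub_mulVec, one_mulVec, smul_mulVec,
      vecMulVec_mulVec, op_smul_eq_smul, dotProduct_sub, dotProduct_smul, smul_eq_mul,
      dotProduct_comm x u]
    nlinarith [rankOneSqrtCoeff_pos (u ⬝ᵥ u)]

lemma abs_sqrtOneSubVecMulVec_apply_le {u : ι → ℝ} (hu : u ⬝ᵥ u ≤ 1) (i j : ι) :
    |sqrtOneSubVecMulVec u i j| ≤ 2 := by
  have hij : |u i * u j| ≤ 1 := by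
    rw [← sq_le_one_iff_abs_le_one, mul_pow]
    exact mul_le_one₀ ((sq_le_dotProduct_self u i).trans hu) (sq_nonneg _)
      ((sq_le_dotProduct_self u j).trans hu)
  have hone : |(1 : Matrix ι ι ℝ) i j| ≤ 1 := by
    rw [one_apply]; split_ifs <;> simp
  have hc := rankOneSqrtCoeff_le_one (u ⬝ᵥ u)
  have hc0 := rankOneSqrtCoeff_pos (u ⬝ᵥ u)
  simp only [sqrtOneSubVecMulVec, Matrix.sub_apply, Matrix.smul_apply, vecMulVec_apply,
    smul_eq_mul]
  calc _ ≤ |(1 : Matrix ι ι ℝ) i j| + |rankOneSqrtCoeff (u ⬝ᵥ u) * (u i * u j)| := abs_sub _ _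
    _ ≤ 1 + 1 := by
      rw [abs_mul, abs_of_pos hc0]
      gcongr
      nlinarith [abs_nonneg (u i * u j)]
    _ = 2 := by norm_num

open scoped MatrixOrder ComplexOrder in
lemma Matrix.PosSemidef.eq_of_mul_self_eq {𝕜 : Type*} [RCLike 𝕜] {A B : Matrix ι ι 𝕜}
    (hA : A.PosSemidef) (hB : B.PosSemidef) (h : A * A = B * B) : A = B := by
  rw [← CFC.sq_eq_sq_iff A B hA.nonneg hB.nonneg, sq, sq, h]

lemma exists_hasFDerivAt_sqrtOneSubVecMulVec_apply {u : ι → ℝ} (hu : u ⬝ᵥ u ≤ 3 / 4)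
    (i j : ι) :
    ∃ L : (ι → ℝ) →L[ℝ] ℝ, HasFDerivAt (fun u => sqrtOneSubVecMulVec u i j) L u ∧
      ‖L‖ ≤ 2 * (1 + Fintype.card ι * ‖u‖ ^ 2) * ‖u‖ := by
  obtain ⟨c', hc', hc'le⟩ := exists_hasDerivAt_rankOneSqrtCoeff_abs_le_one hu
  obtain ⟨Ls, hs, hLs⟩ := exists_hasFDerivAt_dotProduct_self u
  have hprod := (hasFDerivAt_apply (𝕜 := ℝ) i u).fun_mul (hasFDerivAt_apply j u)
  have h := (hasFDerivAt_const ((1 : Matrix ι ι ℝ) i j) u).sub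
    (((hc'.comp_hasFDerivAt (f := fun u : ι → ℝ => u ⬝ᵥ u) u hs)).fun_mul hprod)
  refine ⟨_, h, ?_⟩
  have hij : ‖u i * u j‖ ≤ ‖u‖ ^ 2 := by
    rw [norm_mul, sq]; exact mul_le_mul (norm_le_pi_norm u i) (norm_le_pi_norm u j)
      (norm_nonneg _) (norm_nonneg _)
  have hc : ‖rankOneSqrtCoeff (u ⬝ᵥ u)‖ ≤ 1 := by
    rw [Real.norm_of_nonneg (rankOneSqrtCoeff_pos _).le]; exact rankOneSqrtCoeff_le_one _
  have hc'Ls : ‖c' • Ls‖ ≤ 2 * Fintype.card ι * ‖u‖ := by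
    rw [norm_smul, Real.norm_eq_abs]
    exact (mul_le_of_le_one_left (norm_nonneg _) hc'le).trans hLs
  rw [zero_sub, norm_neg]
  calc _ ≤ ‖rankOneSqrtCoeff (u ⬝ᵥ u)‖ * (2 * ‖u‖) + ‖u‖ ^ 2 * (2 * Fintype.card ι * ‖u‖) :=
        (norm_add_le _ _).trans (add_le_add
          ((norm_smul_le _ _).trans
            (mul_le_mul_of_nonneg_left (norm_smul_proj_add_smul_proj_le u i j) (norm_nonneg _)))
          ((norm_smul_le _ _).trans (by gcongr)))
    _ ≤ 1 * (2 * ‖u‖) + ‖u‖ ^ 2 * (2 * Fintype.card ι * ‖u‖) := by gcongr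
    _ = 2 * (1 + Fintype.card ι * ‖u‖ ^ 2) * ‖u‖ := by ring

lemma ContinuousLinearMap.norm_le_sum_norm_apply_single {F : Type*} [SeminormedAddCommGroup F]
    [NormedSpace ℝ F] (L : (ι → ℝ) →L[ℝ] F) : ‖L‖ ≤ ∑ i, ‖L (Pi.single i 1)‖ := by
  refine L.opNorm_le_bound (by positivity) fun x => ?_
  have hx : L x = ∑ i, x i • L (Pi.single i 1) := by
    conv_lhs => rw [← Finset.univ_sum_single x]
    rw [map_sum]
    refine Finset.sum_congr rfl fun i _ => ?_
    rw [← map_smul, ← Pi.single_smul', smul_eq_mul, mul_one]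
  rw [hx, Finset.sum_mul]
  refine (norm_sum_le _ _).trans (Finset.sum_le_sum fun i _ => ?_)
  rw [norm_smul, mul_comm]
  gcongr
  exact norm_le_pi_norm x i

def partialDerivs (v : (ι → ℝ) → ℝ) (z : ι → ℝ) : ι → ℝ :=
  fun k => fderiv ℝ v z (Pi.single k 1)

lemma exists_hasFDerivAt_partialDerivs {v : (ι → ℝ) → ℝ} {x : ι → ℝ} (hv : ContDiffAt ℝ 2 v x)
    {M : ℝ} (hM : ∀ i j : ι,
      |fderiv ℝ (fun z => fderiv ℝ v z (Pi.single j 1)) x (Pi.single i 1)| ≤ M) :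
    ∃ L : (ι → ℝ) →L[ℝ] ι → ℝ, HasFDerivAt (partialDerivs v) L x ∧
      ‖L‖ ≤ Fintype.card ι * M := by
  have hdiff : DifferentiableAt ℝ (fderiv ℝ v) x :=
    (hv.fderiv_right (m := 1) (by norm_num)).differentiableAt one_ne_zero
  refine ⟨_, hasFDerivAt_pi.2 fun k =>
    (hdiff.clm_apply (differentiableAt_const (Pi.single k 1))).hasFDerivAt, ?_⟩
  refine (ContinuousLinearMap.norm_le_sum_norm_apply_single _).trans ?_
  calc _ ≤ ∑ _i : ι, M := Finset.sum_le_sum fun i _ =>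
        have : Nonempty ι := ⟨i⟩
        (pi_norm_le_iff_of_nonempty _).2 fun k => hM i k
    _ = Fintype.card ι * M := by simp

lemma exists_hasFDerivAt_sqrtOneSubVecMulVec_partialDerivs_apply {v : (ι → ℝ) → ℝ} {x : ι → ℝ}
    (hv : ContDiffAt ℝ 2 v x) {M : ℝ}
    (hM : ∀ i j : ι, |fderiv ℝ (fun z => fderiv ℝ v z (Pi.single j 1)) x (Pi.single i 1)| ≤ M)
    (hu : partialDerivs v x ⬝ᵥ partialDerivs v x ≤ 3 / 4) (i j : ι) :
    ∃ L : (ι → ℝ) →L[ℝ] ℝ,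
      HasFDerivAt (fun z => sqrtOneSubVecMulVec (partialDerivs v z) i j) L x ∧
      ‖L‖ ≤ 2 * (1 + Fintype.card ι * ‖partialDerivs v x‖ ^ 2) * ‖partialDerivs v x‖ *
        (Fintype.card ι * M) := by
  obtain ⟨L, hL, hL_norm⟩ := exists_hasFDerivAt_sqrtOneSubVecMulVec_apply hu i j
  obtain ⟨W, hW, hW_norm⟩ := exists_hasFDerivAt_partialDerivs hv hM
  exact ⟨L.comp W, hL.comp x hW,
    (L.opNorm_comp_le W).trans (mul_le_mul hL_norm hW_norm (norm_nonneg W) (by positivity))⟩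

end

/-- For `v` with `‖∇v‖_∞ ≤ 1/2` and `F = √(Id − ∇v ⊗ ∇v)` (the
positive semidefinite matrix square root), one has `det F = √(1 − |∇v|²) ≥ 1/2`
pointwise on `S`, `F` is bounded and `W^{1,∞}` with
`‖∇F‖_∞ ≤ C ‖∇²v‖_∞ ‖∇v‖_∞`, for a constant `C` independent of `v`. -/
theorem stmt10 :
    ∃ C : ℝ, 0 < C ∧
    ∀ (S : Set (Fin 2 → ℝ)), IsOpen S → Bornology.IsBounded S →
    ∀ (v : (Fin 2 → ℝ) → ℝ), ContDiff ℝ 2 v →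
    ∀ (M₁ M₂ : ℝ),
    (∀ x ∈ S, Real.sqrt (∑ i, (fderiv ℝ v x (Pi.single i 1))^2) ≤ M₁) →
    M₁ ≤ 1/2 →
    (∀ x ∈ S, ∀ i j : Fin 2,
      |fderiv ℝ (fun z => fderiv ℝ v z (Pi.single j 1)) x (Pi.single i 1)| ≤ M₂) →
    ∀ (G : (Fin 2 → ℝ) → Matrix (Fin 2) (Fin 2) ℝ),
    (∀ x ∈ S, (G x).PosSemidef ∧
      G x * G x = 1 - vecMulVec (fun i => fderiv ℝ v x (Pi.single i 1))
        (fun i => fderiv ℝ v x (Pi.single i 1))) →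
    ∀ x ∈ S,
      (G x).det = Real.sqrt (1 - ∑ i, (fderiv ℝ v x (Pi.single i 1))^2) ∧
      1/2 ≤ (G x).det ∧
      (∀ i j : Fin 2, |G x i j| ≤ C) ∧
      (∀ i j : Fin 2, DifferentiableAt ℝ (fun z => G z i j) x ∧
        ‖fderiv ℝ (fun z => G z i j) x‖ ≤ C * M₂ * M₁) := by
  refine ⟨6, by norm_num, fun S hS _ v hv M₁ M₂ hM₁ hM₁half hM₂ G hG x hx => ?_⟩
  have hdot (z) : ∑ i, (fderiv ℝ v z (Pi.single i 1)) ^ 2 =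
      partialDerivs v z ⬝ᵥ partialDerivs v z := by
    simp [dotProduct, sq, partialDerivs]
  have hsmall : ∀ z ∈ S, partialDerivs v z ⬝ᵥ partialDerivs v z ≤ 1 / 4 := fun z hz => by
    have h := (hdot z ▸ hM₁ z hz).trans hM₁half
    rw [Real.sqrt_le_left (by norm_num)] at h
    linarith
  have hG_eq : ∀ z ∈ S, G z = sqrtOneSubVecMulVec (partialDerivs v z) := fun z hz =>
    (hG z hz).1.eq_of_mul_self_eq
      (posSemidef_sqrtOneSubVecMulVec ((hsmall z hz).trans (by norm_num)))
      ((hG z hz).2.trans (sqrtOneSubVecMulVec_mul_self ((hsmall z hz).trans (by norm_num))).symm)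
  have hu := hsmall x hx
  have hnorm : ‖partialDerivs v x‖ ≤ M₁ :=
    (norm_le_sqrt_dotProduct_self _).trans (hdot x ▸ hM₁ x hx)
  rw [hG_eq x hx, det_sqrtOneSubVecMulVec (by linarith), hdot]
  refine ⟨rfl, Real.le_sqrt_of_sq_le (by linarith),
    fun i j => (abs_sqrtOneSubVecMulVec_apply_le (by linarith) i j).trans (by norm_num),
    fun i j => ?_⟩
  obtain ⟨L, hL, hL_norm⟩ :=
    exists_hasFDerivAt_sqrtOneSubVecMulVec_partialDerivs_apply hv.contDiffAt (hM₂ x hx)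
      (by linarith) i j
  have hF : HasFDerivAt (fun z => G z i j) L x :=
    hL.congr_of_eventuallyEq <| Filter.eventuallyEq_of_mem (hS.mem_nhds hx)
      fun z hz => by rw [hG_eq z hz]
  refine ⟨hF.differentiableAt, hF.fderiv ▸ hL_norm.trans ?_⟩
  have hM₂_nonneg : 0 ≤ M₂ := (abs_nonneg _).trans (hM₂ x hx 0 0)
  simp only [Fintype.card_fin, Nat.cast_ofNat]
  calc _ ≤ 2 * (1 + 2 * (1 / 2) ^ 2) * M₁ * (2 * M₂) := by gcongr; linarith
    _ = 6 * M₂ * M₁ := by ring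
end

section
/- Let a > 0, b ≥ 0, c ∈ ℝ with ab = c². For a skew-symmetric 3×3 matrix W with W₂₃ = (c/a)W₁₃ (i.e., W ∈ N_R), define K(W) = −(W₁₂² + W₁₃²)a − 2b W₁₃² − b W₁₂² − (b²/a)W₁₃², let Λ = (λ₁, λ₂) solve MΛ = B with M = [[a,c],[c,b]] and B = W₁₃(a+b, c(1+b/a)). Then the minimum value J_min = ½ΛᵀMΛ − B·Λ − K(W), evaluated with λ₁ = −(c/a)λ₂ + W₁₃(1+b/a), equals W₁₂²(a+b) + W₁₃² (a+b)²/(2a). In particular, if a + b > 0 and J_min = 0, then W₁₂ = W₁₃ = 0, i.e., W = 0. -/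
/-! Completing the square, `a λ₁² + 2c λ₁λ₂ + b λ₂² = (a λ₁ + c λ₂)² / a` when `ab = c²`, and the
linear term `B·Λ` is also a multiple of `a λ₁ + c λ₂`. The stationarity relation fixes
`a λ₁ + c λ₂ = W₁₃ (a + b)`, so `λ₂` drops out and `J_min` becomes a sum of two squares with
positive weights. -/

theorem mul_sq_add_two_mul_mul_add_mul_sq_of_mul_eq_sq {a b c : ℝ} (ha : a ≠ 0)
    (habc : a * b = c ^ 2) (x y : ℝ) :
    a * x ^ 2 + 2 * c * x * y + b * y ^ 2 = (a * x + c * y) ^ 2 / a := by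
  field_simp
  linear_combination y ^ 2 * habc

theorem eq_zero_and_eq_zero_of_sq_mul_add_sq_mul_eq_zero {p q x y : ℝ} (hp : 0 < p) (hq : 0 < q)
    (h : x ^ 2 * p + y ^ 2 * q = 0) : x = 0 ∧ y = 0 := by
  obtain ⟨hx, hy⟩ := (add_eq_zero_iff_of_nonneg (by positivity) (by positivity)).1 h
  simpa [hp.ne', hq.ne'] using And.intro hx hy

theorem stmt14_general (a b c W12 W13 lam2 : ℝ)
    (ha : 0 < a) (habc : a * b = c^2)
    (lam1 : ℝ) (hlam1 : lam1 = -(c/a) * lam2 + W13 * (1 + b/a))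
    (K : ℝ) (hK : K = -(W12^2 + W13^2) * a - 2*b*W13^2 - b*W12^2 - (b^2/a)*W13^2)
    (Jmin : ℝ)
    (hJ : Jmin = (1/2) * (a*lam1^2 + 2*c*lam1*lam2 + b*lam2^2)
        - W13 * ((a+b)*lam1 + c*(1+b/a)*lam2) - K) :
    Jmin = W12^2 * (a+b) + W13^2 * (a+b)^2 / (2*a) ∧
    (0 < a + b → Jmin = 0 → W12 = 0 ∧ W13 = 0) := by
  have hstationary : a * lam1 + c * lam2 = W13 * (a + b) := by
    rw [hlam1]
    field_simp
    ring
  have hlin : (a + b) * lam1 + c * (1 + b / a) * lam2 = (a + b) / a * (a * lam1 + c * lam2) := by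
    field_simp
  have hJmin : Jmin = W12^2 * (a+b) + W13^2 * (a+b)^2 / (2*a) := by
    rw [hJ, mul_sq_add_two_mul_mul_add_mul_sq_of_mul_eq_sq ha.ne' habc, hlin, hstationary, hK]
    field_simp
    ring
  refine ⟨hJmin, fun hab hJ0 => ?_⟩
  rw [hJmin, mul_div_assoc] at hJ0
  exact eq_zero_and_eq_zero_of_sq_mul_add_sq_mul_eq_zero hab (by positivity) hJ0

/-- With `a > 0`, `b ≥ 0`, `ab = c²`, `W₂₃ = (c/a)W₁₃`, and the
stationarity relation `λ₁ = −(c/a)λ₂ + W₁₃(1+b/a)`, the minimum value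
`J_min = ½ΛᵀMΛ − B·Λ − K(W)` equals `W₁₂²(a+b) + W₁₃²(a+b)²/(2a)`; hence if
`a + b > 0` and `J_min = 0` then `W₁₂ = W₁₃ = 0`, i.e. `W = 0`. -/
theorem stmt14 (a b c W12 W13 lam2 : ℝ)
    (ha : 0 < a) (hb : 0 ≤ b) (habc : a * b = c^2)
    (lam1 : ℝ) (hlam1 : lam1 = -(c/a) * lam2 + W13 * (1 + b/a))
    (K : ℝ) (hK : K = -(W12^2 + W13^2) * a - 2*b*W13^2 - b*W12^2 - (b^2/a)*W13^2)
    (Jmin : ℝ)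
    (hJ : Jmin = (1/2) * (a*lam1^2 + 2*c*lam1*lam2 + b*lam2^2)
        - W13 * ((a+b)*lam1 + c*(1+b/a)*lam2) - K) :
    Jmin = W12^2 * (a+b) + W13^2 * (a+b)^2 / (2*a) ∧
    (0 < a + b → Jmin = 0 → W12 = 0 ∧ W13 = 0) :=
  stmt14_general a b c W12 W13 lam2 ha habc lam1 hlam1 K hK Jmin hJ
end
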